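/- There is a universal constant C > 0 such that the following holds. Let H be a real Hilbert space, X ⊆ H a compact connected set, x ∈ X and 0 < r < diam X / 2. Then β''_X(x,r) ≤ β_X(x,r) ≤ C·β''_X(x,r). -/

import Mathlib

open Metric Set MeasureTheory

noncomputable section

/-- The values whose infimum (after multiplying by `1/r`) defines Jones' β-number: for each
affine line `L = {p + t·v : t ∈ ℝ}` (with `v ≠ 0`), the quantity
`sup_{z ∈ X ∩ B(x,r)} dist(z, L) / r`. -/
def jonesBetaSet {H : Type*} [NormedAddCommGroup H] [NormedSpace ℝ H]
    (X : Set H) (x : H) (r : ℝ) : Set ℝ :=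
  { b | ∃ p v : H, v ≠ 0 ∧
      b = (⨆ z ∈ X ∩ Metric.ball x r, Metric.infDist z {y | ∃ t : ℝ, y = p + t • v}) / r }

/-- Jones' β-number `β_X(x,r)`. -/
def jonesBeta {H : Type*} [NormedAddCommGroup H] [NormedSpace ℝ H]
    (X : Set H) (x : H) (r : ℝ) : ℝ :=
  sInf (jonesBetaSet X x r)

/-- The values whose infimum defines `β''_X(x,r)`: for each rectifiable curve
`s : [0,1] → B(x,r)` with `s 0 ≠ s 1`, the quantity
`((ℓ(s) − ‖s(0)−s(1)‖)/‖s(0)−s(1)‖)^{1/2} + sup_{z ∈ X ∩ B(x,r)} dist(z, s([0,1]))/‖s(0)−s(1)‖`. -/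
def betaPPSet {H : Type*} [NormedAddCommGroup H] (X : Set H) (x : H) (r : ℝ) : Set ℝ :=
  { b | ∃ s : ℝ → H, ContinuousOn s (Set.Icc 0 1) ∧
      (∀ t ∈ Set.Icc (0:ℝ) 1, s t ∈ Metric.ball x r) ∧
      s 0 ≠ s 1 ∧ eVariationOn s (Set.Icc 0 1) ≠ ⊤ ∧
      b = Real.sqrt (((eVariationOn s (Set.Icc 0 1)).toReal - dist (s 0) (s 1))
              / dist (s 0) (s 1))
          + (⨆ z ∈ X ∩ Metric.ball x r, Metric.infDist z (s '' Set.Icc 0 1))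
              / dist (s 0) (s 1) }

/-- `β''_X(x,r)`. -/
def betaPP {H : Type*} [NormedAddCommGroup H] (X : Set H) (x : H) (r : ℝ) : ℝ :=
  sInf (betaPPSet X x r)

/-!
For `β'' ≤ β`: given a line `L`, the segment of half-length `ρ < r` centred at `x` on the
parallel line through `x` is a curve with no excess length, and every `z ∈ X ∩ B(x,r)` is
within `dist(z, L) + dist(x, L) + (r - ρ)` of it (project `z` orthogonally and clamp). Dividing
by its length `2ρ` and letting `ρ → r` bounds `β''` by the value of `L`.

For `β ≤ 2β''`: let `s` be a curve with chord length `d`, length `ℓ` and `E = √((ℓ - d)/d)`.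
A point `p` of `s` has `|p - s 0| + |p - s 1| ≤ ℓ`, so its distance `h` to the chord line
satisfies `4h² + d² ≤ ℓ²`, whence `h ≤ E d` when `ℓ ≤ 2d`. The chord line then gives
`β ≤ (sup_z dist(z, s) + E d)/r`, and `d < 2r`; when `ℓ > 2d` instead, `E > 1 ≥ β`.
-/

open Filter Topology
open scoped RealInnerProductSpace

lemma biSup_le_of_nonneg {ι : Type*} {A : Set ι} {f : ι → ℝ} {c : ℝ} (hc : 0 ≤ c)
    (h : ∀ z ∈ A, f z ≤ c) : ⨆ z ∈ A, f z ≤ c :=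
  Real.iSup_le (fun z => Real.iSup_le (h z) hc) hc

section MetricSpace

variable {α : Type*} [PseudoMetricSpace α]

lemma biSup_infDist_nonneg (A K : Set α) : 0 ≤ ⨆ z ∈ A, infDist z K :=
  Real.iSup_nonneg fun _ => Real.iSup_nonneg fun _ => infDist_nonneg

lemma infDist_le_biSup_inter_ball {X K : Set α} {x z : α} {r : ℝ} (hz : z ∈ X ∩ ball x r) :
    infDist z K ≤ ⨆ y ∈ X ∩ ball x r, infDist y K := by
  refine le_ciSup₂ (f := fun y (_ : y ∈ X ∩ ball x r) => infDist y K)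
    ⟨infDist x K + r, ?_⟩ z hz
  simp only [mem_upperBounds, mem_iUnion, mem_range]
  rintro _ ⟨y, hy, rfl⟩
  linarith [infDist_le_infDist_add_dist (x := y) (y := x) (s := K), mem_ball.mp hy.2]

lemma infDist_le_infDist_add_of_forall_infDist_le {K K' : Set α} {c : ℝ} (hK' : K'.Nonempty)
    (h : ∀ y ∈ K', infDist y K ≤ c) (z : α) : infDist z K ≤ infDist z K' + c := by
  rw [← sub_le_iff_le_add, le_infDist hK']
  intro y hy
  linarith [infDist_le_infDist_add_dist (x := z) (y := y) (s := K), h y hy]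

end MetricSpace

lemma edist_add_edist_le_eVariationOn {α E : Type*} [LinearOrder α] [PseudoEMetricSpace E]
    (f : α → E) {a t b : α} (hat : a ≤ t) (htb : t ≤ b) :
    edist (f a) (f t) + edist (f t) (f b) ≤ eVariationOn f (Icc a b) := by
  simpa only [univ_inter] using
    (add_le_add (eVariationOn.edist_le f (s := univ ∩ Icc a t) ⟨trivial, le_rfl, hat⟩
        ⟨trivial, hat, le_rfl⟩)
      (eVariationOn.edist_le f (s := univ ∩ Icc t b) ⟨trivial, le_rfl, htb⟩
        ⟨trivial, htb, le_rfl⟩)).trans_eq (eVariationOn.Icc_add_Icc f hat htb (mem_univ t))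

lemma eVariationOn_lineMap {E : Type*} [NormedAddCommGroup E] [NormedSpace ℝ E] (a b : E) :
    eVariationOn (AffineMap.lineMap a b : ℝ → E) (Icc 0 1) = edist a b := by
  refine le_antisymm ?_ ?_
  · have := (lipschitzWith_lineMap (𝕜 := ℝ) a b).lipschitzOnWith.comp_eVariationOn_le
      (g := id) (s := Icc (0 : ℝ) 1) (mapsTo_univ _ _)
    rwa [Function.comp_id, eVariationOn_id_Icc, sub_zero, ENNReal.ofReal_one, mul_one,
      ← edist_nndist] at this
  · simpa using eVariationOn.edist_le (AffineMap.lineMap a b : ℝ → E)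
      (left_mem_Icc.2 zero_le_one) (right_mem_Icc.2 zero_le_one)

lemma betaPPSet_nonneg {H : Type*} [NormedAddCommGroup H] {X : Set H} {x : H} {r b : ℝ}
    (hb : b ∈ betaPPSet X x r) : 0 ≤ b := by
  obtain ⟨s, -, -, -, -, rfl⟩ := hb
  exact add_nonneg (Real.sqrt_nonneg _) (div_nonneg (biSup_infDist_nonneg _ _) dist_nonneg)

section NormedSpace

variable {H : Type*} [NormedAddCommGroup H] [NormedSpace ℝ H]

def lineThrough (p v : H) : Set H := {y | ∃ t : ℝ, y = p + t • v}

lemma mem_lineThrough_self (p v : H) : p ∈ lineThrough p v := ⟨0, by simp⟩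

lemma lineThrough_smul {c : ℝ} (hc : c ≠ 0) (p v : H) :
    lineThrough p (c • v) = lineThrough p v := by
  ext y
  constructor
  · rintro ⟨t, rfl⟩
    exact ⟨t * c, by rw [mul_smul]⟩
  · rintro ⟨t, rfl⟩
    exact ⟨t / c, by rw [smul_smul, div_mul_cancel₀ t hc]⟩

/-- Translating `lineThrough p v` by `x - q` for `q` on it gives `lineThrough x v`. -/
lemma infDist_lineThrough_le_infDist {p v y : H} (hy : y ∈ lineThrough p v) (x : H) :
    infDist y (lineThrough x v) ≤ infDist x (lineThrough p v) := by
  obtain ⟨τ, rfl⟩ := hy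
  rw [le_infDist ⟨p, mem_lineThrough_self p v⟩]
  rintro _ ⟨τ₀, rfl⟩
  refine (infDist_le_dist_of_mem
    (show x + (τ - τ₀) • v ∈ lineThrough x v from ⟨τ - τ₀, rfl⟩)).trans_eq ?_
  rw [dist_eq_norm, dist_eq_norm, ← norm_neg, sub_smul]
  congr 1
  abel

lemma infDist_lineThrough_le_add (p v x z : H) :
    infDist z (lineThrough x v) ≤ infDist z (lineThrough p v) + infDist x (lineThrough p v) :=
  infDist_le_infDist_add_of_forall_infDist_le ⟨p, mem_lineThrough_self p v⟩
    (fun _ hy => infDist_lineThrough_le_infDist hy x) z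

lemma jonesBetaSet_nonneg {X : Set H} {x : H} {r b : ℝ} (hr : 0 ≤ r)
    (hb : b ∈ jonesBetaSet X x r) : 0 ≤ b := by
  obtain ⟨p, v, -, rfl⟩ := hb
  exact div_nonneg (biSup_infDist_nonneg _ _) hr

lemma jonesBeta_le_iSup_infDist_lineThrough_div (X : Set H) {x p v : H} {r : ℝ} (hr : 0 ≤ r)
    (hv : v ≠ 0) :
    jonesBeta X x r ≤ (⨆ z ∈ X ∩ ball x r, infDist z (lineThrough p v)) / r :=
  csInf_le ⟨0, fun _ => jonesBetaSet_nonneg hr⟩ ⟨p, v, hv, rfl⟩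

lemma jonesBeta_le_one (X : Set H) {x v : H} {r : ℝ} (hr : 0 < r) (hv : v ≠ 0) :
    jonesBeta X x r ≤ 1 := by
  refine (jonesBeta_le_iSup_infDist_lineThrough_div X (p := x) hr.le hv).trans
    ((div_le_one hr).2 ?_)
  exact biSup_le_of_nonneg hr.le fun z hz =>
    (infDist_le_dist_of_mem (mem_lineThrough_self x v)).trans (mem_ball.1 hz.2).le

lemma jonesBetaSet_nonempty [Nontrivial H] (X : Set H) (x : H) (r : ℝ) :
    (jonesBetaSet X x r).Nonempty :=
  let ⟨v, hv⟩ := exists_ne (0 : H)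
  ⟨_, x, v, hv, rfl⟩

/-- A straight segment has no excess length, so only its distance term enters `β''`. -/
lemma iSup_infDist_segment_div_mem_betaPPSet (X : Set H) {x a b : H} {r : ℝ}
    (ha : a ∈ ball x r) (hb : b ∈ ball x r) (hab : a ≠ b) :
    (⨆ z ∈ X ∩ ball x r, infDist z (segment ℝ a b)) / dist a b ∈ betaPPSet X x r := by
  refine ⟨AffineMap.lineMap a b, AffineMap.lineMap_continuous.continuousOn, fun t ht => ?_,
    by simpa using hab, by simp [eVariationOn_lineMap], ?_⟩
  · exact (convex_ball x r).segment_subset ha hb (segment_eq_image_lineMap ℝ a b ▸ ⟨t, ht, rfl⟩)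
  · simp [eVariationOn_lineMap, ← segment_eq_image_lineMap, edist_dist]

lemma betaPP_le_iSup_infDist_segment_div (X : Set H) {x a b : H} {r : ℝ}
    (ha : a ∈ ball x r) (hb : b ∈ ball x r) (hab : a ≠ b) :
    betaPP X x r ≤ (⨆ z ∈ X ∩ ball x r, infDist z (segment ℝ a b)) / dist a b :=
  csInf_le ⟨0, fun _ => betaPPSet_nonneg⟩ (iSup_infDist_segment_div_mem_betaPPSet X ha hb hab)

lemma betaPPSet_nonempty [Nontrivial H] (X : Set H) (x : H) {r : ℝ} (hr : 0 < r) :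
    (betaPPSet X x r).Nonempty := by
  obtain ⟨v, hv⟩ := exists_norm_eq H (half_pos hr).le
  have hv0 : v ≠ 0 := norm_pos_iff.1 (hv ▸ half_pos hr)
  refine ⟨_, iSup_infDist_segment_div_mem_betaPPSet X (mem_ball_self hr) ?_
    (add_ne_left.2 hv0).symm⟩
  rw [mem_ball, dist_self_add_left, hv]
  exact half_lt_self hr

end NormedSpace

lemma exists_mem_Icc_abs_sub_le {t r ρ : ℝ} (ht : |t| ≤ r) (hρ : 0 ≤ ρ) (hρr : ρ ≤ r) :
    ∃ c ∈ Icc (-ρ) ρ, |t - c| ≤ r - ρ :=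
  ⟨max (-ρ) (min ρ t), by grind, by grind⟩

section InnerProductSpace

variable {H : Type*} [NormedAddCommGroup H] [InnerProductSpace ℝ H]

lemma inner_sub_inner_div_smul_self_eq_zero (y v : H) :
    ⟪y - (⟪y, v⟫ / ‖v‖ ^ 2) • v, v⟫ = 0 := by
  rcases eq_or_ne v 0 with rfl | hv
  · simp
  · rw [inner_sub_left, real_inner_smul_left, real_inner_self_eq_norm_sq,
      div_mul_cancel₀ _ (by positivity), sub_self]

lemma norm_add_smul_sq_of_inner_eq_zero {w v : H} (h : ⟪w, v⟫ = 0) (t : ℝ) :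
    ‖w + t • v‖ ^ 2 = ‖w‖ ^ 2 + t ^ 2 * ‖v‖ ^ 2 := by
  rw [norm_add_sq_real, real_inner_smul_right, h, norm_smul, Real.norm_eq_abs, mul_pow, sq_abs]
  ring

lemma norm_sub_inner_smul_le {u : H} (hu : ‖u‖ = 1) (y : H) (t : ℝ) :
    ‖y - ⟪y, u⟫ • u‖ ≤ ‖y - t • u‖ := by
  have hperp : ⟪y - ⟪y, u⟫ • u, u⟫ = 0 := by
    simpa [hu] using inner_sub_inner_div_smul_self_eq_zero y u
  have h := norm_add_smul_sq_of_inner_eq_zero hperp (⟪y, u⟫ - t)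
  rw [show y - ⟪y, u⟫ • u + (⟪y, u⟫ - t) • u = y - t • u by module] at h
  exact (pow_le_pow_iff_left₀ (norm_nonneg _) (norm_nonneg _) two_ne_zero).1
    (by nlinarith [sq_nonneg (⟪y, u⟫ - t)])

lemma dist_le_infDist_lineThrough {u : H} (hu : ‖u‖ = 1) (x z : H) :
    dist z (x + ⟪z - x, u⟫ • u) ≤ infDist z (lineThrough x u) := by
  rw [le_infDist ⟨x, mem_lineThrough_self x u⟩]
  rintro _ ⟨t, rfl⟩
  simpa only [dist_eq_norm, sub_add_eq_sub_sub] using norm_sub_inner_smul_le hu (z - x) t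

lemma infDist_segment_le_infDist_lineThrough_add {u x z : H} {r ρ : ℝ} (hu : ‖u‖ = 1)
    (hz : z ∈ ball x r) (hρ : 0 < ρ) (hρr : ρ ≤ r) :
    infDist z (segment ℝ (x - ρ • u) (x + ρ • u)) ≤ infDist z (lineThrough x u) + (r - ρ) := by
  set t := ⟪z - x, u⟫
  have ht : |t| ≤ r := (abs_real_inner_le_norm _ _).trans <| by
    rw [hu, mul_one, ← dist_eq_norm]
    exact (mem_ball.1 hz).le
  obtain ⟨c, ⟨hcl, hcr⟩, htc⟩ := exists_mem_Icc_abs_sub_le ht hρ.le hρr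
  have hmem : x + c • u ∈ segment ℝ (x - ρ • u) (x + ρ • u) := by
    rw [segment_eq_image']
    refine ⟨(c + ρ) / (2 * ρ), ⟨div_nonneg (by linarith) (by positivity), ?_⟩, ?_⟩
    · rw [div_le_one (by positivity)]
      linarith
    · dsimp only
      rw [show x + ρ • u - (x - ρ • u) = (2 * ρ) • u by module, smul_smul,
        div_mul_cancel₀ _ (by positivity)]
      module
  calc infDist z (segment ℝ (x - ρ • u) (x + ρ • u))
      ≤ dist z (x + t • u) + dist (x + t • u) (x + c • u) :=
        (infDist_le_dist_of_mem hmem).trans (dist_triangle _ _ _)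
    _ ≤ infDist z (lineThrough x u) + (r - ρ) := by
        gcongr
        · exact dist_le_infDist_lineThrough hu x z
        · rwa [dist_add_left, dist_eq_norm, ← sub_smul, norm_smul, hu, mul_one]

lemma betaPP_le_iSup_infDist_lineThrough_div {X : Set H} {x u : H} {r : ℝ} (hx : x ∈ X)
    (hr : 0 < r) (hu : ‖u‖ = 1) (p : H) :
    betaPP X x r ≤ (⨆ z ∈ X ∩ ball x r, infDist z (lineThrough p u)) / r := by
  set S := ⨆ z ∈ X ∩ ball x r, infDist z (lineThrough p u)
  have hS : 0 ≤ S := biSup_infDist_nonneg _ _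
  have hxS : infDist x (lineThrough p u) ≤ S := infDist_le_biSup_inter_ball ⟨hx, mem_ball_self hr⟩
  have hsegment : ∀ ρ ∈ Ioo 0 r, betaPP X x r ≤ (2 * S + (r - ρ)) / (2 * ρ) := by
    rintro ρ ⟨hρ, hρr⟩
    have hend : ∀ c : ℝ, |c| < r → x + c • u ∈ ball x r := fun c hc => by
      rwa [mem_ball, dist_self_add_left, norm_smul, hu, mul_one]
    have hd : dist (x - ρ • u) (x + ρ • u) = 2 * ρ := by
      rw [dist_eq_norm, show x - ρ • u - (x + ρ • u) = (-(2 * ρ)) • u by module, norm_smul, hu,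
        mul_one, Real.norm_eq_abs, abs_neg, abs_of_pos (by positivity)]
    have hne : x - ρ • u ≠ x + ρ • u := dist_pos.1 (hd ▸ by positivity)
    refine (betaPP_le_iSup_infDist_segment_div X
      (by simpa [sub_eq_add_neg] using hend (-ρ) (by rwa [abs_neg, abs_of_pos hρ]))
      (hend ρ (by rwa [abs_of_pos hρ])) hne).trans ?_
    rw [hd]
    gcongr
    refine biSup_le_of_nonneg (by linarith) fun z hz => ?_
    linarith [infDist_segment_le_infDist_lineThrough_add hu hz.2 hρ hρr.le,
      infDist_lineThrough_le_add p u x z, infDist_le_biSup_inter_ball (K := lineThrough p u) hz]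
  have hlim : Tendsto (fun ρ => (2 * S + (r - ρ)) / (2 * ρ)) (𝓝[<] r) (𝓝 (S / r)) := by
    have hcont : ContinuousAt (fun ρ => (2 * S + (r - ρ)) / (2 * ρ)) r := by
      fun_prop (disch := positivity)
    convert hcont.tendsto.mono_left nhdsWithin_le_nhds using 2
    field_simp
    ring
  exact ge_of_tendsto hlim (eventually_of_mem (Ioo_mem_nhdsLT hr) hsegment)

lemma betaPP_le_of_mem_jonesBetaSet {X : Set H} {x : H} {r b : ℝ} (hx : x ∈ X) (hr : 0 < r)
    (hb : b ∈ jonesBetaSet X x r) : betaPP X x r ≤ b := by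
  obtain ⟨p, v, hv, rfl⟩ := hb
  have hv' : ‖v‖ ≠ 0 := norm_ne_zero_iff.2 hv
  have := betaPP_le_iSup_infDist_lineThrough_div (u := ‖v‖⁻¹ • v) hx hr
    (by rw [norm_smul, norm_inv, norm_norm, inv_mul_cancel₀ hv']) p
  rwa [lineThrough_smul (inv_ne_zero hv')] at this

/-- Reflecting `w + (c - 1) • v` across `ℝ ∙ v` keeps its norm, and the reflected vector
`-w + (c - 1) • v` differs from `w + c • v` by `2 • w + v`. -/
lemma sq_add_four_mul_sq_le_of_inner_eq_zero {w v : H} (h : ⟪w, v⟫ = 0) (c : ℝ) :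
    ‖v‖ ^ 2 + 4 * ‖w‖ ^ 2 ≤ (‖w + c • v‖ + ‖w + (c - 1) • v‖) ^ 2 := by
  have hreflect : ‖w + (c - 1) • v‖ = ‖w + (1 - c) • v‖ := by
    rw [← sq_eq_sq₀ (norm_nonneg _) (norm_nonneg _), norm_add_smul_sq_of_inner_eq_zero h,
      norm_add_smul_sq_of_inner_eq_zero h]
    ring
  have hchord : ‖(2 : ℝ) • w + (1 : ℝ) • v‖ ≤ ‖w + c • v‖ + ‖w + (1 - c) • v‖ :=
    calc ‖(2 : ℝ) • w + (1 : ℝ) • v‖ = ‖(w + c • v) + (w + (1 - c) • v)‖ := by congr 1; module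
      _ ≤ _ := norm_add_le _ _
  have hpyth : ‖(2 : ℝ) • w + (1 : ℝ) • v‖ ^ 2 = ‖v‖ ^ 2 + 4 * ‖w‖ ^ 2 := by
    rw [norm_add_smul_sq_of_inner_eq_zero (by rw [real_inner_smul_left, h, mul_zero]),
      norm_smul, Real.norm_two]
    ring
  rw [hreflect, ← hpyth]
  exact pow_le_pow_left₀ (norm_nonneg _) hchord 2

lemma four_mul_sq_infDist_lineThrough_le (a b p : H) :
    4 * infDist p (lineThrough a (b - a)) ^ 2 ≤ (dist p a + dist p b) ^ 2 - dist a b ^ 2 := by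
  set v := b - a
  set c := ⟪p - a, v⟫ / ‖v‖ ^ 2
  set w := p - a - c • v
  have hinf : infDist p (lineThrough a v) ≤ ‖w‖ :=
    (infDist_le_dist_of_mem (show a + c • v ∈ lineThrough a v from ⟨c, rfl⟩)).trans_eq
      (by rw [dist_eq_norm, sub_add_eq_sub_sub])
  have hpa : dist p a = ‖w + c • v‖ := by rw [dist_eq_norm, sub_add_cancel]
  have hpb : dist p b = ‖w + (c - 1) • v‖ := by
    rw [dist_eq_norm]
    congr 1
    simp only [w, v]
    module
  have hab : dist a b = ‖v‖ := by rw [dist_comm, dist_eq_norm]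
  rw [hpa, hpb, hab]
  nlinarith [pow_le_pow_left₀ infDist_nonneg hinf 2,
    sq_add_four_mul_sq_le_of_inner_eq_zero (inner_sub_inner_div_smul_self_eq_zero (p - a) v) c]

lemma infDist_lineThrough_le_of_dist_add_dist_le {a b p : H} {ℓ : ℝ} (hab : a ≠ b)
    (hℓ : dist p a + dist p b ≤ ℓ) (hℓd : ℓ ≤ 2 * dist a b) :
    infDist p (lineThrough a (b - a)) ≤ √((ℓ - dist a b) / dist a b) * dist a b := by
  set d := dist a b
  have hd : 0 < d := dist_pos.2 hab
  have hdℓ : d ≤ ℓ := (dist_triangle_left a b p).trans hℓ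
  have hsqrt : √((ℓ - d) / d) * d = √((ℓ - d) * d) := by
    rw [show (ℓ - d) * d = (ℓ - d) / d * d ^ 2 by field_simp,
      Real.sqrt_mul (div_nonneg (sub_nonneg.2 hdℓ) hd.le), Real.sqrt_sq hd.le]
  rw [hsqrt, Real.le_sqrt infDist_nonneg (mul_nonneg (sub_nonneg.2 hdℓ) hd.le)]
  nlinarith [four_mul_sq_infDist_lineThrough_le a b p,
    pow_le_pow_left₀ (add_nonneg dist_nonneg dist_nonneg) hℓ 2,
    mul_le_mul_of_nonneg_left hℓd (sub_nonneg.2 hdℓ)]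

lemma jonesBeta_le_two_mul_of_mem_betaPPSet {X : Set H} {x : H} {r b : ℝ} (hr : 0 < r)
    (hb : b ∈ betaPPSet X x r) : jonesBeta X x r ≤ 2 * b := by
  obtain ⟨s, -, hball, hne, hfin, rfl⟩ := hb
  set d := dist (s 0) (s 1)
  set ℓ := (eVariationOn s (Icc 0 1)).toReal
  set E := √((ℓ - d) / d)
  set G := ⨆ z ∈ X ∩ ball x r, infDist z (s '' Icc 0 1)
  have h0 : (0 : ℝ) ∈ Icc (0 : ℝ) 1 := left_mem_Icc.2 zero_le_one
  have h1 : (1 : ℝ) ∈ Icc (0 : ℝ) 1 := right_mem_Icc.2 zero_le_one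
  have hd : 0 < d := dist_pos.2 hne
  have hd2r : d < 2 * r := by
    linarith [dist_triangle_right (s 0) (s 1) x, mem_ball.1 (hball 0 h0), mem_ball.1 (hball 1 h1)]
  have hv : s 1 - s 0 ≠ 0 := sub_ne_zero.2 hne.symm
  have hG : 0 ≤ G := biSup_infDist_nonneg _ _
  have hpath : ∀ t ∈ Icc (0 : ℝ) 1, dist (s t) (s 0) + dist (s t) (s 1) ≤ ℓ := fun t ht => by
    have := ENNReal.toReal_mono hfin (edist_add_edist_le_eVariationOn s ht.1 ht.2)
    rwa [ENNReal.toReal_add (edist_ne_top _ _) (edist_ne_top _ _), ← dist_edist, ← dist_edist,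
      dist_comm] at this
  rcases le_or_gt ℓ (2 * d) with hℓ | hℓ
  · have hcurve : ∀ y ∈ s '' Icc 0 1, infDist y (lineThrough (s 0) (s 1 - s 0)) ≤ E * d := by
      rintro _ ⟨t, ht, rfl⟩
      exact infDist_lineThrough_le_of_dist_add_dist_le hne (hpath t ht) hℓ
    have hline : ∀ z ∈ X ∩ ball x r, infDist z (lineThrough (s 0) (s 1 - s 0)) ≤ G + E * d :=
      fun z hz => (infDist_le_infDist_add_of_forall_infDist_le ⟨s 0, mem_image_of_mem s h0⟩
        hcurve z).trans (add_le_add_left (infDist_le_biSup_inter_ball hz) _)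
    calc jonesBeta X x r ≤ (⨆ z ∈ X ∩ ball x r, infDist z (lineThrough (s 0) (s 1 - s 0))) / r :=
          jonesBeta_le_iSup_infDist_lineThrough_div X hr.le hv
      _ ≤ (G + E * d) / r := by gcongr; exact biSup_le_of_nonneg (by positivity) hline
      _ ≤ 2 * (E + G / d) := by
          rw [div_le_iff₀ hr]
          have : G ≤ 2 * r * (G / d) := by
            rw [← mul_div_assoc, le_div_iff₀ hd]
            nlinarith
          nlinarith [Real.sqrt_nonneg ((ℓ - d) / d)]
  · have hE : 1 ≤ E := by
      rw [Real.le_sqrt' one_pos, one_pow, le_div_iff₀ hd]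
      linarith
    calc jonesBeta X x r ≤ 1 := jonesBeta_le_one X hr hv
      _ ≤ 2 * (E + G / d) := by nlinarith [div_nonneg hG hd.le]

end InnerProductSpace

/-- **Proposition.** In a real Hilbert space, `β''_X(x,r) ≤ β_X(x,r) ≤ C·β''_X(x,r)` for a
universal constant `C > 0`, whenever `X` is compact connected, `x ∈ X`, `0 < r < diam X / 2`. -/
theorem betaPP_le_jonesBeta_le_betaPP :
    ∃ C : ℝ, 0 < C ∧
      ∀ (H : Type*) [NormedAddCommGroup H] [InnerProductSpace ℝ H] [CompleteSpace H],
        ∀ X : Set H, IsCompact X → IsConnected X →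
          ∀ x ∈ X, ∀ r : ℝ, 0 < r → r < Metric.diam X / 2 →
            betaPP X x r ≤ jonesBeta X x r ∧
            jonesBeta X x r ≤ C * betaPP X x r := by
  refine ⟨2, two_pos, fun H _ _ _ X _ _ x hx r hr hrX => ?_⟩
  have hX : X.Nontrivial := by
    by_contra hX
    linarith [diam_subsingleton (not_nontrivial_iff.1 hX)]
  have := Set.nontrivial_of_nontrivial hX
  refine ⟨le_csInf (jonesBetaSet_nonempty X x r) fun b hb =>
    betaPP_le_of_mem_jonesBetaSet hx hr hb, ?_⟩
  rw [← div_le_iff₀' two_pos]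
  exact le_csInf (betaPPSet_nonempty X x hr) fun b hb => by
    rw [div_le_iff₀' two_pos]
    exact jonesBeta_le_two_mul_of_mem_betaPPSet hr hb
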